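/- arXiv:2508.11623 — 6 statements merged into one kernel-verified Lean document; each statement's English description precedes it below -/
import Mathlib

section
/- In a continuous quantale Q, if q₁ ≪ q₂ then there exists q ≪ 1 (the unit) such that q₁ ≪ q₂ ⊗ q, and there exists q′ ≪ 1 such that q₁ ≪ q′ ⊗ q₂. -/
def wayBelow {Q : Type*} [CompleteLattice Q] (x y : Q) : Prop :=
  ∀ D : Set Q, D.Nonempty → DirectedOn (· ≤ ·) D → y ≤ sSup D → ∃ d ∈ D, x ≤ d

/-- A complete lattice is continuous when every element is the join of the
elements way-below it. -/
def ContinuousLattice (Q : Type*) [CompleteLattice Q] : Prop :=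
  ∀ y : Q, y = sSup {x : Q | wayBelow x y}

section aux

variable {Q : Type*} [CompleteLattice Q]

lemma wb_bot (y : Q) : wayBelow ⊥ y := by
  intro D hne _ _
  obtain ⟨d, hd⟩ := hne
  exact ⟨d, hd, bot_le⟩

lemma wb_mono {x' x y y' : Q} (hx : x' ≤ x) (h : wayBelow x y) (hy : y ≤ y') :
    wayBelow x' y' := by
  intro D hne hdir hle
  obtain ⟨d, hd, hxd⟩ := h D hne hdir (le_trans hy hle)
  exact ⟨d, hd, le_trans hx hxd⟩

lemma wb_sup {x₁ x₂ y : Q} (h₁ : wayBelow x₁ y) (h₂ : wayBelow x₂ y) :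
    wayBelow (x₁ ⊔ x₂) y := by
  intro D hne hdir hle
  obtain ⟨d₁, hd₁, h₁'⟩ := h₁ D hne hdir hle
  obtain ⟨d₂, hd₂, h₂'⟩ := h₂ D hne hdir hle
  obtain ⟨d, hd, hdd₁, hdd₂⟩ := hdir d₁ hd₁ d₂ hd₂
  exact ⟨d, hd, sup_le (h₁'.trans hdd₁) (h₂'.trans hdd₂)⟩

lemma wb_set_directed (hcont : ContinuousLattice Q) (y : Q) :
    ({x : Q | wayBelow x y}).Nonempty ∧ DirectedOn (· ≤ ·) {x : Q | wayBelow x y} := by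
  refine ⟨⟨⊥, wb_bot y⟩, ?_⟩
  intro a ha b hb
  exact ⟨a ⊔ b, wb_sup ha hb, le_sup_left, le_sup_right⟩

lemma wb_interpolate (hcont : ContinuousLattice Q) {x y : Q} (h : wayBelow x y) :
    ∃ z : Q, wayBelow x z ∧ wayBelow z y := by
  set D : Set Q := {u : Q | ∃ v, wayBelow u v ∧ wayBelow v y} with hD
  have hne : D.Nonempty := ⟨⊥, ⊥, wb_bot ⊥, wb_bot y⟩
  have hdir : DirectedOn (· ≤ ·) D := by
    rintro u₁ ⟨v₁, hu₁, hv₁⟩ u₂ ⟨v₂, hu₂, hv₂⟩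
    exact ⟨u₁ ⊔ u₂, ⟨v₁ ⊔ v₂,
        wb_sup (wb_mono le_rfl hu₁ le_sup_left) (wb_mono le_rfl hu₂ le_sup_right),
        wb_sup hv₁ hv₂⟩, le_sup_left, le_sup_right⟩
  have hle : y ≤ sSup D := by
    calc y = sSup {v : Q | wayBelow v y} := hcont y
      _ ≤ sSup D := by
        apply sSup_le
        intro v hv
        calc v = sSup {u : Q | wayBelow u v} := hcont v
          _ ≤ sSup D := sSup_le_sSup (fun u hu => ⟨v, hu, hv⟩)
  obtain ⟨d, ⟨v, hdv, hvy⟩, hxd⟩ := h D hne hdir hle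
  exact ⟨v, wb_mono hxd hdv le_rfl, hvy⟩

end aux

theorem continuous_quantale_interpolation_unit {Q : Type*} [Monoid Q] [CompleteLattice Q]
    [IsQuantale Q] (hcont : ContinuousLattice Q) {q₁ q₂ : Q} (h : wayBelow q₁ q₂) :
    (∃ q : Q, wayBelow q 1 ∧ wayBelow q₁ (q₂ * q)) ∧
    (∃ q' : Q, wayBelow q' 1 ∧ wayBelow q₁ (q' * q₂)) := by
  obtain ⟨z, hxz, hzy⟩ := wb_interpolate hcont h
  obtain ⟨hne, hdir⟩ := wb_set_directed hcont (1 : Q)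
  set D := {x : Q | wayBelow x (1 : Q)} with hDdef
  have h1 : (1 : Q) = sSup D := hcont 1
  constructor
  · -- right multiplication
    set S := (fun d => q₂ * d) '' D with hS
    have hSne : S.Nonempty := hne.image _
    have hSdir : DirectedOn (· ≤ ·) S := by
      rintro _ ⟨a, ha, rfl⟩ _ ⟨b, hb, rfl⟩
      obtain ⟨c, hc, hac, hbc⟩ := hdir a ha b hb
      exact ⟨q₂ * c, ⟨c, hc, rfl⟩, mul_le_mul_right hac _, mul_le_mul_right hbc _⟩
    have hSle : q₂ ≤ sSup S := by
      have : q₂ * sSup D = ⨆ y ∈ D, q₂ * y := mul_sSup_distrib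
      rw [show q₂ = q₂ * 1 by rw [mul_one], h1, this]
      rw [hS, sSup_image]
    obtain ⟨_, ⟨d, hd, rfl⟩, hzd⟩ := hzy S hSne hSdir hSle
    exact ⟨d, hd, wb_mono le_rfl hxz hzd⟩
  · set S := (fun d => d * q₂) '' D with hS
    have hSne : S.Nonempty := hne.image _
    have hSdir : DirectedOn (· ≤ ·) S := by
      rintro _ ⟨a, ha, rfl⟩ _ ⟨b, hb, rfl⟩
      obtain ⟨c, hc, hac, hbc⟩ := hdir a ha b hb
      exact ⟨c * q₂, ⟨c, hc, rfl⟩, mul_le_mul_left hac _, mul_le_mul_left hbc _⟩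
    have hSle : q₂ ≤ sSup S := by
      have : sSup D * q₂ = ⨆ y ∈ D, y * q₂ := sSup_mul_distrib
      rw [show q₂ = 1 * q₂ by rw [one_mul], h1, this]
      rw [hS, sSup_image]
    obtain ⟨_, ⟨d, hd, rfl⟩, hzd⟩ := hzy S hSne hSdir hSle
    exact ⟨d, hd, wb_mono le_rfl hxz hzd⟩
end

section
/- In a continuous quantale Q, if q ≪ q₁ ⊗ q₂ then there exists q′ ≪ q₂ such that q ≪ q₁ ⊗ q′, and similarly there exists q″ ≪ q₁ such that q ≪ q″ ⊗ q₂. -/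
lemma bot_wayBelow {Q : Type*} [CompleteLattice Q] (y : Q) : wayBelow ⊥ y := by
  intro D hne _ _
  obtain ⟨d, hd⟩ := hne
  exact ⟨d, hd, bot_le⟩

lemma wayBelow_of_le_of_wayBelow {Q : Type*} [CompleteLattice Q] {x y z : Q}
    (hxy : x ≤ y) (h : wayBelow y z) : wayBelow x z := by
  intro D hne hdir hle
  obtain ⟨d, hd, hyd⟩ := h D hne hdir hle
  exact ⟨d, hd, hxy.trans hyd⟩

lemma wayBelow_of_wayBelow_of_le {Q : Type*} [CompleteLattice Q] {x y z : Q}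
    (h : wayBelow x y) (hyz : y ≤ z) : wayBelow x z := by
  intro D hne hdir hle
  exact h D hne hdir (hyz.trans hle)

lemma sup_wayBelow {Q : Type*} [CompleteLattice Q] {x x' y : Q}
    (h : wayBelow x y) (h' : wayBelow x' y) : wayBelow (x ⊔ x') y := by
  intro D hne hdir hle
  obtain ⟨d, hd, hxd⟩ := h D hne hdir hle
  obtain ⟨d', hd', hxd'⟩ := h' D hne hdir hle
  obtain ⟨e, he, hde, hd'e⟩ := hdir d hd d' hd'
  exact ⟨e, he, sup_le (hxd.trans hde) (hxd'.trans hd'e)⟩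

lemma aux_wayBelow {Q : Type*} [CompleteLattice Q] (hcont : ContinuousLattice Q)
    (f : Q → Q) (hf : ∀ S : Set Q, f (sSup S) = ⨆ a ∈ S, f a)
    {q y : Q} (h : wayBelow q (f y)) :
    ∃ a : Q, wayBelow a y ∧ wayBelow q (f a) := by
  have hmono : Monotone f := by
    intro a b hab
    have : f (sSup {a, b}) = ⨆ x ∈ ({a, b} : Set Q), f x := hf _
    rw [sSup_pair, sup_eq_right.mpr hab] at this
    calc f a ≤ ⨆ x ∈ ({a, b} : Set Q), f x :=
          le_biSup f (Set.mem_insert a {b})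
      _ = f b := this.symm
  set S : Set Q := {x | ∃ a : Q, wayBelow a y ∧ wayBelow x (f a)} with hS
  have hne : S.Nonempty := ⟨⊥, ⊥, bot_wayBelow y, bot_wayBelow _⟩
  have hdir : DirectedOn (· ≤ ·) S := by
    rintro x ⟨a, ha, hx⟩ x' ⟨a', ha', hx'⟩
    refine ⟨x ⊔ x', ⟨a ⊔ a', sup_wayBelow ha ha', ?_⟩, le_sup_left, le_sup_right⟩
    exact sup_wayBelow
      (wayBelow_of_wayBelow_of_le hx (hmono le_sup_left))
      (wayBelow_of_wayBelow_of_le hx' (hmono le_sup_right))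
  have hle : f y ≤ sSup S := by
    conv_lhs => rw [hcont y]
    rw [hf]
    refine iSup₂_le fun a ha => ?_
    conv_lhs => rw [hcont (f a)]
    refine sSup_le fun x hx => le_sSup ⟨a, ha, hx⟩
  obtain ⟨x, ⟨a, ha, hx⟩, hqx⟩ := h S hne hdir hle
  exact ⟨a, ha, wayBelow_of_le_of_wayBelow hqx hx⟩

theorem continuous_quantale_wayBelow_tensor {Q : Type*} [Monoid Q] [CompleteLattice Q]
    [IsQuantale Q] (hcont : ContinuousLattice Q) {q q₁ q₂ : Q}
    (h : wayBelow q (q₁ * q₂)) :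
    (∃ q' : Q, wayBelow q' q₂ ∧ wayBelow q (q₁ * q')) ∧
    (∃ q'' : Q, wayBelow q'' q₁ ∧ wayBelow q (q'' * q₂)) := by
  constructor
  · exact aux_wayBelow hcont (fun x => q₁ * x) (fun S => mul_sSup_distrib) h
  · exact aux_wayBelow hcont (fun x => x * q₂) (fun S => sSup_mul_distrib) h
end

section
/- Given a Q-metric space (X, d) over a continuous quantale Q, if y is in the open ball B(x, δ) (i.e., δ ≪ d(x,y)), then there exists δ′ ≪ 1 such that B(y, δ′) ⊆ B(x, δ). -/
/-- Open ball for a quantale-valued metric. -/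
def ball {Q : Type*} [CompleteLattice Q] {X : Type*} (d : X → X → Q) (x : X) (δ : Q) :
    Set X := {y : X | wayBelow δ (d x y)}

/-- The open ball topology. -/
def ballTopology {Q : Type*} [Monoid Q] [CompleteLattice Q] {X : Type*}
    (d : X → X → Q) : TopologicalSpace X :=
  TopologicalSpace.generateFrom {B : Set X | ∃ x δ, wayBelow δ (1 : Q) ∧ B = ball d x δ}

section Aux

variable {Q : Type*} [CompleteLattice Q]

lemma wayBelow.le {a b : Q} (h : wayBelow a b) : a ≤ b := by
  obtain ⟨d, hd, hle⟩ := h {b} ⟨b, rfl⟩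
    (fun u hu v hv => ⟨b, rfl, le_of_eq hu, le_of_eq hv⟩) (by simp)
  rw [Set.mem_singleton_iff] at hd; exact hd ▸ hle

lemma le_wayBelow {a b c : Q} (hab : a ≤ b) (h : wayBelow b c) : wayBelow a c :=
  fun D hne hdir hle => by
    obtain ⟨e, he, hbe⟩ := h D hne hdir hle
    exact ⟨e, he, hab.trans hbe⟩

lemma wayBelow_le {a b c : Q} (h : wayBelow a b) (hbc : b ≤ c) : wayBelow a c :=
  fun D hne hdir hle => h D hne hdir (hbc.trans hle)

lemma bot_wayBelow_s7 (b : Q) : wayBelow ⊥ b :=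
  fun D hne _ _ => ⟨hne.choose, hne.choose_spec, bot_le⟩

lemma sup_wayBelow_s7 {a b c : Q} (ha : wayBelow a c) (hb : wayBelow b c) :
    wayBelow (a ⊔ b) c := fun D hne hdir hle => by
  obtain ⟨d1, hd1, h1⟩ := ha D hne hdir hle
  obtain ⟨d2, hd2, h2⟩ := hb D hne hdir hle
  obtain ⟨e, he, he1, he2⟩ := hdir d1 hd1 d2 hd2
  exact ⟨e, he, sup_le (h1.trans he1) (h2.trans he2)⟩

lemma directedOn_wayBelow (c : Q) : DirectedOn (· ≤ ·) {a : Q | wayBelow a c} :=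
  fun a ha b hb => ⟨a ⊔ b, sup_wayBelow_s7 ha hb, le_sup_left, le_sup_right⟩

/-- Interpolation property in a continuous lattice. -/
lemma wayBelow_interpolate (hcont : ContinuousLattice Q) {a c : Q} (h : wayBelow a c) :
    ∃ b : Q, wayBelow a b ∧ wayBelow b c := by
  set D : Set Q := {u : Q | ∃ v, wayBelow u v ∧ wayBelow v c} with hD
  have hne : D.Nonempty := ⟨⊥, ⊥, bot_wayBelow_s7 ⊥, bot_wayBelow_s7 c⟩
  have hdir : DirectedOn (· ≤ ·) D := by
    rintro u1 ⟨v1, hu1, hv1⟩ u2 ⟨v2, hu2, hv2⟩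
    exact ⟨u1 ⊔ u2,
      ⟨v1 ⊔ v2, sup_wayBelow_s7 (wayBelow_le hu1 le_sup_left) (wayBelow_le hu2 le_sup_right),
        sup_wayBelow_s7 hv1 hv2⟩, le_sup_left, le_sup_right⟩
  have hle : c ≤ sSup D := by
    conv_lhs => rw [hcont c]
    apply sSup_le
    intro v hv
    conv_lhs => rw [hcont v]
    exact sSup_le fun u hu => le_sSup ⟨v, hu, hv⟩
  obtain ⟨u, ⟨v, huv, hvc⟩, hau⟩ := h D hne hdir hle
  exact ⟨v, le_wayBelow hau huv, hvc⟩

end Aux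

theorem ball_in_ball {Q : Type*} [Monoid Q] [CompleteLattice Q] [IsQuantale Q]
    (hcont : ContinuousLattice Q) {X : Type*} (d : X → X → Q)
    (hrefl : ∀ x : X, (1 : Q) ≤ d x x)
    (htri : ∀ x y z : X, d x y * d y z ≤ d x z)
    {x y : X} {δ : Q} (hδ : wayBelow δ (1 : Q)) (hy : y ∈ ball d x δ) :
    ∃ δ' : Q, wayBelow δ' (1 : Q) ∧ ball d y δ' ⊆ ball d x δ := by
  obtain ⟨ε, hδε, hε⟩ := wayBelow_interpolate hcont hy
  -- the directed set of products d x y * δ' with δ' ≪ 1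
  set D : Set Q := (fun t => d x y * t) '' {t : Q | wayBelow t (1 : Q)} with hD
  have hne : D.Nonempty := ⟨d x y * ⊥, ⊥, bot_wayBelow_s7 1, rfl⟩
  have hdir : DirectedOn (· ≤ ·) D := by
    rintro _ ⟨t1, ht1, rfl⟩ _ ⟨t2, ht2, rfl⟩
    exact ⟨d x y * (t1 ⊔ t2), ⟨t1 ⊔ t2, sup_wayBelow_s7 ht1 ht2, rfl⟩,
      mul_le_mul_right le_sup_left _, mul_le_mul_right le_sup_right _⟩
  have hsup : d x y ≤ sSup D := by
    have h1 : d x y = d x y * sSup {t : Q | wayBelow t (1 : Q)} := by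
      rw [← hcont 1, mul_one]
    rw [h1, IsQuantale.mul_sSup_distrib]
    exact iSup₂_le fun t ht => le_sSup ⟨t, ht, rfl⟩
  obtain ⟨_, ⟨δ', hδ', rfl⟩, hεd⟩ := hε D hne hdir hsup
  refine ⟨δ', hδ', fun z hz => ?_⟩
  have hz' : δ' ≤ d y z := hz.le
  have : d x y * δ' ≤ d x z := le_trans (mul_le_mul_right hz' _) (htri x y z)
  exact wayBelow_le (wayBelow_le hδε hεd) this
end

section
/- Let (X,d) be a Q-metric space over a continuous quantale. For δ₁, δ₂ ≪ 1 and δ with δ ≪ δ₁ ⊗ δ₂, one has B_R(B_R(A, δ₁), δ₂) ⊆ B_R(A, δ) for every A ⊆ X. -/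
/-- The set of points belonging to `A` with precision greater than `δ`. -/
def BR {Q : Type*} [CompleteLattice Q] {X : Type*} (d : X → X → Q) (A : Set X) (δ : Q) :
    Set X := {y : X | ∃ x ∈ A, wayBelow δ (d x y)}

theorem wayBelow.le_s11 {Q : Type*} [CompleteLattice Q] {x y : Q} (h : wayBelow x y) : x ≤ y := by
  obtain ⟨d, rfl, hxd⟩ := h {y} (Set.singleton_nonempty y) (directedOn_singleton y)
    (sSup_singleton.ge)
  exact hxd

theorem wayBelow.trans_le {Q : Type*} [CompleteLattice Q] {x y z : Q} (hxy : wayBelow x y)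
    (hyz : y ≤ z) : wayBelow x z :=
  fun D hne hdir hz => hxy D hne hdir (hyz.trans hz)

theorem BR_comp_subset_general {Q : Type*} [Monoid Q] [CompleteLattice Q] [IsQuantale Q]
    {X : Type*} (d : X → X → Q)
    (htri : ∀ x y z : X, d x y * d y z ≤ d x z)
    {δ₁ δ₂ δ : Q}
    (hδ : wayBelow δ (δ₁ * δ₂)) (A : Set X) :
    BR d (BR d A δ₁) δ₂ ⊆ BR d A δ := by
  rintro z ⟨y, ⟨x, hxA, hxy⟩, hyz⟩
  refine ⟨x, hxA, hδ.trans_le ?_⟩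
  calc δ₁ * δ₂ ≤ d x y * d y z := mul_le_mul' hxy.le_s11 hyz.le_s11
    _ ≤ d x z := htri x y z

theorem BR_comp_subset {Q : Type*} [Monoid Q] [CompleteLattice Q] [IsQuantale Q]
    (hcont : ContinuousLattice Q) {X : Type*} (d : X → X → Q)
    (hrefl : ∀ x : X, (1 : Q) ≤ d x x)
    (htri : ∀ x y z : X, d x y * d y z ≤ d x z)
    {δ₁ δ₂ δ : Q} (h₁ : wayBelow δ₁ (1 : Q)) (h₂ : wayBelow δ₂ (1 : Q))
    (hδ : wayBelow δ (δ₁ * δ₂)) (A : Set X) :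
    BR d (BR d A δ₁) δ₂ ⊆ BR d A δ :=
  BR_comp_subset_general d htri hδ A
end

section
/- Let P be a poset, I a set, and o : P^I → P a monotone map. Define ô : D(P)^I → D(P) by ô(Θ) = ↓{o(θ) | θ ∈ Π_{i∈I} Θ(i)}. Then ô(η ∘ θ) = η(o(θ)) for every θ ∈ P^I, and ô distributes over arbitrary joins in each coordinate: ô(λi. ⊔ S(i)) = ⊔{ô(Θ) | Θ ∈ Π_{i∈I} S(i)} for every S ∈ P(D(P))^I with each S(i) nonempty when needed. -/
/-- The lift of a monotone operation `o : P^I → P` to lower sets. -/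
def ohat {P : Type*} [PartialOrder P] {I : Type*} (o : (I → P) → P)
    (Θ : I → LowerSet P) : LowerSet P :=
  lowerClosure {p : P | ∃ θ : I → P, (∀ i, θ i ∈ Θ i) ∧ p = o θ}

lemma mem_ohat_iff {P : Type*} [PartialOrder P] {I : Type*} (o : (I → P) → P)
    (Θ : I → LowerSet P) (p : P) :
    p ∈ ohat o Θ ↔ ∃ θ : I → P, (∀ i, θ i ∈ Θ i) ∧ p ≤ o θ := by
  constructor
  · rintro ⟨q, ⟨θ, hθ, rfl⟩, hle⟩
    exact ⟨θ, hθ, hle⟩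
  · rintro ⟨θ, hθ, hle⟩
    exact ⟨o θ, ⟨θ, hθ, rfl⟩, hle⟩

theorem ohat_eta_and_distrib {P : Type*} [PartialOrder P] {I : Type*}
    (o : (I → P) → P) (hmono : Monotone o) :
    (∀ θ : I → P, ohat o (fun i => LowerSet.Iic (θ i)) = LowerSet.Iic (o θ)) ∧
    (∀ S : I → Set (LowerSet P), (∀ i, (S i).Nonempty) →
      ohat o (fun i => sSup (S i)) =
        sSup {A : LowerSet P | ∃ Θ : I → LowerSet P, (∀ i, Θ i ∈ S i) ∧ A = ohat o Θ}) := by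
  constructor
  · intro θ
    apply SetLike.ext
    intro p
    rw [mem_ohat_iff]
    constructor
    · rintro ⟨ψ, hψ, hle⟩
      exact hle.trans (hmono fun i => hψ i)
    · intro hp
      exact ⟨θ, fun i => le_refl _, hp⟩
  · intro S hS
    apply SetLike.ext
    intro p
    rw [mem_ohat_iff]
    constructor
    · rintro ⟨ψ, hψ, hle⟩
      have : ∀ i, ∃ A ∈ S i, ψ i ∈ A := by
        intro i
        have := hψ i
        simpa [LowerSet.mem_sSup_iff] using this
      choose Θ hΘ hmem using this
      have : p ∈ ohat o Θ := (mem_ohat_iff o Θ p).2 ⟨ψ, hmem, hle⟩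
      have hA : ohat o Θ ≤ sSup {A : LowerSet P | ∃ Θ : I → LowerSet P, (∀ i, Θ i ∈ S i) ∧ A = ohat o Θ} :=
        le_sSup ⟨Θ, hΘ, rfl⟩
      exact hA this
    · intro hp
      rw [LowerSet.mem_sSup_iff] at hp
      obtain ⟨A, ⟨Θ, hΘ, rfl⟩, hpA⟩ := hp
      obtain ⟨ψ, hψ, hle⟩ := (mem_ohat_iff o Θ p).1 hpA
      refine ⟨ψ, fun i => ?_, hle⟩
      have hA : Θ i ≤ sSup (S i) := le_sSup (hΘ i)
      exact hA (hψ i)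
end

section
/- In a prime-continuous lattice, if q₁ ⋘ q₂ (totally below) then there exists q with q₁ ⋘ q ⋘ q₂. -/
def totallyBelow {Q : Type*} [CompleteLattice Q] (x y : Q) : Prop :=
  ∀ D : Set Q, y ≤ sSup D → ∃ d ∈ D, x ≤ d

theorem totallyBelow_interpolation {Q : Type*} [CompleteLattice Q]
    (hpc : ∀ y : Q, y = sSup {x : Q | totallyBelow x y})
    {q₁ q₂ : Q} (h : totallyBelow q₁ q₂) :
    ∃ q : Q, totallyBelow q₁ q ∧ totallyBelow q q₂ := by
  set D : Set Q := {x | ∃ y, totallyBelow x y ∧ totallyBelow y q₂} with hD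
  have hq₂ : q₂ ≤ sSup D := by
    conv_lhs => rw [hpc q₂]
    apply sSup_le
    intro y hy
    conv_lhs => rw [hpc y]
    apply sSup_le
    intro x hx
    exact le_sSup ⟨y, hx, hy⟩
  obtain ⟨d, ⟨y, hdy, hyq⟩, hq₁d⟩ := h D hq₂
  refine ⟨y, ?_, hyq⟩
  intro S hS
  obtain ⟨s, hs, hds⟩ := hdy S hS
  exact ⟨s, hs, hq₁d.trans hds⟩
end
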